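/- Given staircase data, let {f₀,…,f_{r−1}} = A ⊔ B be a partition of the first r staircase generators with f_{r−1} ∈ A. Then adjoining the last generator f_r = H₁⋯H_{t_r} to B enlarges the intersection by exactly one principal ideal: Ideal.span A ⊓ Ideal.span (B ∪ {f_r}) = (Ideal.span A ⊓ Ideal.span B) + ⟨V₁⋯V_{s₁}·f_r⟩. -/

import Mathlib

/- Common setup: R = ℂ[x₀,x₁,y₀,y₁] as MvPolynomial (Fin 4) ℂ with
   x₀ = X 0, x₁ = X 1, y₀ = X 2, y₁ = X 3.
   `Hf a` is the horizontal form a₁x₀ - a₀x₁ of the point a = [a₀:a₁] ∈ ℙ¹;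
   `Vf b` is the vertical form b₁y₀ - b₀y₁;
   `cross a b ≠ 0` says the (nonzero) pairs a, b are non-proportional,
   i.e. define distinct points of ℙ¹. -/

open MvPolynomial

noncomputable section

abbrev R : Type := MvPolynomial (Fin 4) ℂ

def Hf (a : ℂ × ℂ) : R := C a.2 * X 0 - C a.1 * X 1

def Vf (b : ℂ × ℂ) : R := C b.2 * X 2 - C b.1 * X 3

def cross (a b : ℂ × ℂ) : ℂ := a.1 * b.2 - a.2 * b.1

/-- The defining ideal of the point P = A×B of ℙ¹×ℙ¹. -/
def Ipt (P : (ℂ × ℂ) × (ℂ × ℂ)) : Ideal R := Ideal.span {Hf P.1, Vf P.2}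

/-- The defining ideal of a finite set of points (I_∅ = R = ⊤). -/
def Ipts (X : Finset ((ℂ × ℂ) × (ℂ × ℂ))) : Ideal R := X.inf Ipt

/-- The defining ideal of a set of points (I_∅ = R = ⊤). -/
def IptsSet (W : Set ((ℂ × ℂ) × (ℂ × ℂ))) : Ideal R := ⨅ P ∈ W, Ipt P

/-- Bihomogeneous: homogeneous separately in x₀,x₁ and in y₀,y₁. -/
def Bihom (f : R) : Prop :=
  ∃ a b : ℕ, IsWeightedHomogeneous (![1,1,0,0] : Fin 4 → ℕ) f a ∧
    IsWeightedHomogeneous (![0,0,1,1] : Fin 4 → ℕ) f b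

/-- `G` minimally generates `I`. -/
def MinGen (G : Finset R) (I : Ideal R) : Prop :=
  Ideal.span (G : Set R) = I ∧ ∀ g ∈ G, Ideal.span ((G : Set R) \ {g}) ≠ I

/-- Staircase data: r ≥ 1, 0 = t₀ < t₁ < ⋯ < t_r, 0 = s₀ < s₁ < ⋯ < s_r,
    pairwise distinct points A₁,…,A_{t_r} of ℙ¹ and pairwise distinct points
    B₁,…,B_{s_r} of ℙ¹ (all indexed starting at 1). -/
structure Staircase where
  r : ℕ
  t : ℕ → ℕ
  s : ℕ → ℕ
  A : ℕ → ℂ × ℂ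
  B : ℕ → ℂ × ℂ
  hr : 1 ≤ r
  ht0 : t 0 = 0
  hs0 : s 0 = 0
  ht : ∀ k, k < r → t k < t (k + 1)
  hs : ∀ k, k < r → s k < s (k + 1)
  hA0 : ∀ i ∈ Finset.Icc 1 (t r), A i ≠ 0
  hB0 : ∀ j ∈ Finset.Icc 1 (s r), B j ≠ 0
  hAd : ∀ i ∈ Finset.Icc 1 (t r), ∀ i' ∈ Finset.Icc 1 (t r), i ≠ i' → cross (A i) (A i') ≠ 0
  hBd : ∀ j ∈ Finset.Icc 1 (s r), ∀ j' ∈ Finset.Icc 1 (s r), j ≠ j' → cross (B j) (B j') ≠ 0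

/-- The staircase generator f_k = H₁⋯H_{t_k} · V₁⋯V_{s_{r-k}}. -/
def stairGen (S : Staircase) (k : ℕ) : R :=
  (∏ i ∈ Finset.Icc 1 (S.t k), Hf (S.A i)) * ∏ j ∈ Finset.Icc 1 (S.s (S.r - k)), Vf (S.B j)

/-!
Every generator f_k with k < r is divisible by V = V₁⋯V_{s₁}, so the ideal generated by A and B
lies in ⟨V⟩. If g ∈ ⟨A⟩ is written as z + c·f_r with z ∈ ⟨B⟩, then c·f_r = g − z is divisible by V;
as V is a product of linear forms in y and f_r a product of nonzero linear forms in x, they have no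
common factor, so V ∣ c. Since V·f_r is a multiple of f_{r−1} ∈ A, this makes z ∈ ⟨A⟩ ⊓ ⟨B⟩ and
c·f_r ∈ ⟨V·f_r⟩.
-/

open MvPolynomial Finset

theorem Ideal.inf_span_singleton_sup_eq_of_isRelPrime {A : Type*} [CommRing A]
    [DecompositionMonoid A] {I J : Ideal A} {v f : A} (hvf : v * f ∈ I)
    (hI : I ≤ Ideal.span {v}) (hJ : J ≤ Ideal.span {v}) (hrel : IsRelPrime v f) :
    I ⊓ (Ideal.span {f} ⊔ J) = I ⊓ J ⊔ Ideal.span {v * f} := by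
  refine le_antisymm ?_ (sup_le (inf_le_inf_left _ le_sup_right) (le_inf ?_ ?_))
  · rintro g ⟨hgI, hgJ⟩
    obtain ⟨_, hy, z, hz, rfl⟩ := Submodule.mem_sup.mp hgJ
    obtain ⟨c, rfl⟩ := Ideal.mem_span_singleton'.mp hy
    have hv : v ∣ c * f := by
      rw [← Ideal.mem_span_singleton, ← add_sub_cancel_right (c * f) z]
      exact sub_mem (hI hgI) (hJ hz)
    obtain ⟨d, rfl⟩ := hrel.dvd_of_dvd_mul_right hv
    have hzI : z ∈ I := by
      simpa [mul_assoc, mul_left_comm] using sub_mem hgI (I.mul_mem_left d hvf)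
    rw [add_comm]
    exact Submodule.add_mem_sup ⟨hzI, hz⟩
      (Ideal.mem_span_singleton.mpr ⟨d, by ring⟩)
  · exact (Ideal.span_singleton_le_iff_mem _).mpr hvf
  · exact le_sup_of_le_left (Ideal.span_singleton_le_span_singleton.mpr (dvd_mul_left f v))

lemma Hf_ne_zero {a : ℂ × ℂ} (ha : a ≠ 0) : Hf a ≠ 0 := by
  intro h
  have h2 := congrArg (eval ![1, 0, 0, 0]) h
  have h1 := congrArg (eval ![0, 1, 0, 0]) h
  simp only [Hf, map_sub, map_mul, eval_C, eval_X, map_zero] at h1 h2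
  exact ha (Prod.ext (by simpa using h1) (by simpa using h2))

lemma Vf_ne_zero {b : ℂ × ℂ} (hb : b ≠ 0) : Vf b ≠ 0 := by
  intro h
  have h2 := congrArg (eval ![0, 0, 1, 0]) h
  have h1 := congrArg (eval ![0, 0, 0, 1]) h
  simp only [Vf, map_sub, map_mul, eval_C, eval_X, map_zero] at h1 h2
  exact hb (Prod.ext (by simpa using h1) (by simpa using h2))

lemma irreducible_Vf {b : ℂ × ℂ} (hb : b ≠ 0) : Irreducible (Vf b) := by
  have hdeg : (Vf b).totalDegree = 1 :=
    ((isHomogeneous_C_mul_X _ _).sub (isHomogeneous_C_mul_X _ _)).totalDegree (Vf_ne_zero hb)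
  refine irreducible_of_totalDegree_eq_one hdeg fun x hx => ?_
  by_contra hx0
  obtain rfl : x = 0 := by simpa using hx0
  exact Vf_ne_zero hb (by ext m; simpa using hx m)

lemma Vf_not_dvd_Hf (b : ℂ × ℂ) {a : ℂ × ℂ} (ha : a ≠ 0) : ¬ Vf b ∣ Hf a := by
  rintro ⟨q, hq⟩
  have := congrArg (aeval ![X 0, X 1, 0, 0] : R →ₐ[ℂ] R) hq
  simp only [Hf, Vf, map_sub, map_mul, aeval_C, aeval_X] at this
  exact Hf_ne_zero ha (by simpa [Hf] using this)

lemma isRelPrime_prod_Vf_prod_Hf {A B : ℕ → ℂ × ℂ} {T U : Finset ℕ}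
    (hA : ∀ i ∈ T, A i ≠ 0) (hB : ∀ j ∈ U, B j ≠ 0) :
    IsRelPrime (∏ j ∈ U, Vf (B j)) (∏ i ∈ T, Hf (A i)) :=
  IsRelPrime.prod_left fun j hj => IsRelPrime.prod_right fun i hi =>
    (irreducible_Vf (hB j hj)).isRelPrime_iff_not_dvd.mpr (Vf_not_dvd_Hf _ (hA i hi))

section Staircase

variable (S : Staircase)

lemma Staircase.s_mono {k l : ℕ} (hkl : k ≤ l) (hl : l ≤ S.r) : S.s k ≤ S.s l := by
  induction l, hkl using Nat.le_induction with
  | base => exact le_rfl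
  | succ l _ ih => exact (ih (by omega)).trans (S.hs l (by omega)).le

lemma stairGen_r : stairGen S S.r = ∏ i ∈ Icc 1 (S.t S.r), Hf (S.A i) := by
  simp [stairGen, S.hs0]

lemma prod_Vf_dvd_stairGen {k : ℕ} (hk : k < S.r) :
    (∏ j ∈ Icc 1 (S.s 1), Vf (S.B j)) ∣ stairGen S k :=
  (prod_dvd_prod_of_subset _ _ _
    (Icc_subset_Icc le_rfl (S.s_mono (by omega) (by omega)))).mul_left _

lemma stairGen_pred_dvd :
    stairGen S (S.r - 1) ∣ (∏ j ∈ Icc 1 (S.s 1), Vf (S.B j)) * stairGen S S.r := by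
  have ht : S.t (S.r - 1) ≤ S.t S.r :=
    Nat.sub_add_cancel S.hr ▸ (S.ht (S.r - 1) (Nat.sub_lt S.hr Nat.one_pos)).le
  rw [stairGen, Nat.sub_sub_self S.hr, stairGen_r, mul_comm]
  exact mul_dvd_mul_left _
    (prod_dvd_prod_of_subset _ _ _ (Icc_subset_Icc le_rfl ht))

lemma isRelPrime_prod_Vf_stairGen_r :
    IsRelPrime (∏ j ∈ Icc 1 (S.s 1), Vf (S.B j)) (stairGen S S.r) := by
  rw [stairGen_r]
  exact isRelPrime_prod_Vf_prod_Hf S.hA0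
    fun j hj => S.hB0 j (Icc_subset_Icc le_rfl (S.s_mono S.hr le_rfl) hj)

lemma span_stairGen_le {K : Finset ℕ} (hK : K ⊆ range S.r) :
    Ideal.span (stairGen S '' ↑K) ≤ Ideal.span {∏ j ∈ Icc 1 (S.s 1), Vf (S.B j)} := by
  rw [Ideal.span_le]
  rintro _ ⟨k, hk, rfl⟩
  exact Ideal.mem_span_singleton.mpr (prod_Vf_dvd_stairGen S (mem_range.mp (hK hk)))

end Staircase

theorem statement15_general (S : Staircase) (KA KB : Finset ℕ)
    (hUnion : KA ∪ KB = Finset.range S.r)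
    (hlast : S.r - 1 ∈ KA) :
    Ideal.span (stairGen S '' ↑KA) ⊓
        Ideal.span (insert (stairGen S S.r) (stairGen S '' ↑KB)) =
      (Ideal.span (stairGen S '' ↑KA) ⊓ Ideal.span (stairGen S '' ↑KB)) +
        Ideal.span {(∏ j ∈ Finset.Icc 1 (S.s 1), Vf (S.B j)) * stairGen S S.r} := by
  have hKA : KA ⊆ range S.r := hUnion ▸ subset_union_left
  have hKB : KB ⊆ range S.r := hUnion ▸ subset_union_right
  have hlastA : (∏ j ∈ Icc 1 (S.s 1), Vf (S.B j)) * stairGen S S.r ∈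
      Ideal.span (stairGen S '' ↑KA) :=
    Ideal.mem_of_dvd _ (stairGen_pred_dvd S) (Ideal.subset_span ⟨_, hlast, rfl⟩)
  rw [Ideal.span_insert, Submodule.add_eq_sup]
  exact Ideal.inf_span_singleton_sup_eq_of_isRelPrime hlastA (span_stairGen_le S hKA)
    (span_stairGen_le S hKB) (isRelPrime_prod_Vf_stairGen_r S)

/-- (From the proof of Theorem 5.4.) If {f₀,…,f_{r-1}} = A ⊔ B is a partition of the
first r staircase generators (encoded by index sets KA ⊔ KB = {0,…,r-1}) with
f_{r-1} ∈ A, then adjoining f_r = H₁⋯H_{t_r} to B enlarges the intersection by exactly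
the principal ideal ⟨V₁⋯V_{s₁} · f_r⟩. -/
theorem statement15 (S : Staircase) (KA KB : Finset ℕ)
    (hUnion : KA ∪ KB = Finset.range S.r) (hDisj : Disjoint KA KB)
    (hlast : S.r - 1 ∈ KA) :
    Ideal.span (stairGen S '' ↑KA) ⊓
        Ideal.span (insert (stairGen S S.r) (stairGen S '' ↑KB)) =
      (Ideal.span (stairGen S '' ↑KA) ⊓ Ideal.span (stairGen S '' ↑KB)) +
        Ideal.span {(∏ j ∈ Finset.Icc 1 (S.s 1), Vf (S.B j)) * stairGen S S.r} :=
  statement15_general S KA KB hUnion hlast
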